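/- In the saddle-point setting, with the block-diagonal preconditioner M_D = [[F, 0],[0, H2]] and H = blockdiag(H1, H2), if η < 1/2 then ‖H(M_D⁻¹K) − (M_D⁻¹K)ᵀH‖_{H,H⁻¹} ≤ 4 C₁ η. -/

import Mathlib

open Matrix

/-- The `H`-norm of a vector: `‖u‖_H = (uᵀ H u)^{1/2}`. -/
noncomputable def vnorm {α : Type*} [Fintype α] (H : Matrix α α ℝ) (u : α → ℝ) : ℝ :=
  Real.sqrt (u ⬝ᵥ (H *ᵥ u))

/-- The weighted operator norm `‖M‖_{H1,H2} = sup_{v ≠ 0} ‖M v‖_{H2} / ‖v‖_{H1}`.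
For a square matrix, `‖M‖_H = wnorm H H M`; the spectral norm is `wnorm 1 1 M`. -/
noncomputable def wnorm {α β : Type*} [Fintype α] [Fintype β]
    (H1 : Matrix α α ℝ) (H2 : Matrix β β ℝ) (M : Matrix β α ℝ) : ℝ :=
  sSup {r : ℝ | ∃ v : α → ℝ, v ≠ 0 ∧ r = vnorm H2 (M *ᵥ v) / vnorm H1 v}

/-!
Writing `F = H1 + N`, the preconditioned matrix is `A = M_D⁻¹ K = [[I, F⁻¹Bᵀ], [H2⁻¹B, 0]]`, and
`H A - Aᵀ H` is block anti-diagonal with blocks `-N F⁻¹ Bᵀ` and `-B F⁻ᵀ N`. Since `F` and `Fᵀ`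
have the same quadratic form as `H1`, `‖z‖²_{H1} = zᵀ F z ≤ ‖F z‖_{H1⁻¹} ‖z‖_{H1}`, so
`‖F⁻¹‖_{H1⁻¹,H1} ≤ 1` and likewise for `F⁻ᵀ`. Together with `‖Bᵀ‖_{H2,H1⁻¹} ≤ ‖B‖_{H1,H2⁻¹}` and
submultiplicativity, each block has norm at most `C₁ η`, hence so does the commutator.
-/

lemma le_of_sq_le_mul {a t : ℝ} (ha : 0 ≤ a) (h : t ^ 2 ≤ a * t) : t ≤ a := by
  nlinarith

section WeightedNorm

variable {α β γ : Type*} [Fintype α] [Fintype β] [Fintype γ]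

lemma vnorm_nonneg (P : Matrix α α ℝ) (u : α → ℝ) : 0 ≤ vnorm P u := Real.sqrt_nonneg _

@[simp]
lemma vnorm_zero (P : Matrix α α ℝ) : vnorm P 0 = 0 := by
  simp [vnorm]

lemma sq_vnorm {P : Matrix α α ℝ} (hP : P.PosSemidef) (u : α → ℝ) :
    vnorm P u ^ 2 = u ⬝ᵥ (P *ᵥ u) :=
  Real.sq_sqrt (by simpa using hP.dotProduct_mulVec_nonneg u)

lemma vnorm_pos {P : Matrix α α ℝ} (hP : P.PosDef) {u : α → ℝ} (hu : u ≠ 0) :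
    0 < vnorm P u :=
  Real.sqrt_pos.2 (by simpa using hP.dotProduct_mulVec_pos hu)

lemma vnorm_neg (P : Matrix α α ℝ) (u : α → ℝ) : vnorm P (-u) = vnorm P u := by
  simp [vnorm, mulVec_neg]

lemma vnorm_smul (P : Matrix α α ℝ) (c : ℝ) (u : α → ℝ) :
    vnorm P (c • u) = |c| * vnorm P u := by
  rw [vnorm, vnorm, mulVec_smul, dotProduct_smul, smul_dotProduct, smul_eq_mul, smul_eq_mul,
    ← mul_assoc, ← sq, Real.sqrt_mul (sq_nonneg c), Real.sqrt_sq_eq_abs]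

@[fun_prop]
lemma continuous_vnorm (P : Matrix α α ℝ) : Continuous (vnorm P) := by
  unfold vnorm
  fun_prop

lemma sq_dotProduct_mulVec_le {P : Matrix α α ℝ} (hP : P.PosSemidef) (x y : α → ℝ) :
    (x ⬝ᵥ (P *ᵥ y)) ^ 2 ≤ (x ⬝ᵥ (P *ᵥ x)) * (y ⬝ᵥ (P *ᵥ y)) := by
  have hsymm : y ⬝ᵥ (P *ᵥ x) = x ⬝ᵥ (P *ᵥ y) := by
    rw [← dotProduct_transpose_mulVec, (isHermitian_iff_isSymm.1 hP.isHermitian).eq]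
  have hquad (t : ℝ) :
      0 ≤ y ⬝ᵥ (P *ᵥ y) * (t * t) + 2 * x ⬝ᵥ (P *ᵥ y) * t + x ⬝ᵥ (P *ᵥ x) := by
    have := hP.dotProduct_mulVec_nonneg (x + t • y)
    simp only [star_trivial, mulVec_add, mulVec_smul, add_dotProduct, dotProduct_add,
      smul_dotProduct, dotProduct_smul, smul_eq_mul, hsymm] at this
    linarith
  have := discrim_le_zero hquad
  unfold discrim at this
  linarith

lemma dotProduct_mulVec_le_vnorm_mul_vnorm {P : Matrix α α ℝ} (hP : P.PosSemidef)
    (x y : α → ℝ) : x ⬝ᵥ (P *ᵥ y) ≤ vnorm P x * vnorm P y := by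
  rw [vnorm, vnorm, ← Real.sqrt_mul (by simpa using hP.dotProduct_mulVec_nonneg x)]
  exact (le_abs_self _).trans (Real.abs_le_sqrt (sq_dotProduct_mulVec_le hP x y))

lemma vnorm_inv_mulVec [DecidableEq α] {P : Matrix α α ℝ} (hP : P.PosDef) (u : α → ℝ) :
    vnorm P (P⁻¹ *ᵥ u) = vnorm P⁻¹ u := by
  rw [vnorm, vnorm, mulVec_mulVec, mul_nonsing_inv _ ((isUnit_iff_isUnit_det P).1 hP.isUnit),
    one_mulVec, dotProduct_comm]

lemma dotProduct_le_vnorm_inv_mul_vnorm [DecidableEq α] {P : Matrix α α ℝ} (hP : P.PosDef)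
    (u w : α → ℝ) : u ⬝ᵥ w ≤ vnorm P⁻¹ u * vnorm P w := by
  have hu : u ⬝ᵥ w = (P⁻¹ *ᵥ u) ⬝ᵥ (P *ᵥ w) := by
    rw [dotProduct_mulVec, ← mulVec_transpose, (isHermitian_iff_isSymm.1 hP.isHermitian).eq,
      mulVec_mulVec, mul_nonsing_inv _ ((isUnit_iff_isUnit_det P).1 hP.isUnit),
      one_mulVec]
  rw [hu, ← vnorm_inv_mulVec hP]
  exact dotProduct_mulVec_le_vnorm_mul_vnorm hP.posSemidef _ _

lemma wnorm_nonneg (P : Matrix α α ℝ) (R : Matrix β β ℝ) (M : Matrix β α ℝ) :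
    0 ≤ wnorm P R M :=
  Real.sSup_nonneg (by
    rintro _ ⟨v, -, rfl⟩
    exact div_nonneg (vnorm_nonneg _ _) (vnorm_nonneg _ _))

lemma wnorm_le_of_forall {P : Matrix α α ℝ} {R : Matrix β β ℝ} {M : Matrix β α ℝ} {c : ℝ}
    (hc : 0 ≤ c) (h : ∀ v, vnorm R (M *ᵥ v) ≤ c * vnorm P v) : wnorm P R M ≤ c :=
  Real.sSup_le (by
    rintro _ ⟨v, -, rfl⟩
    exact div_le_of_le_mul₀ (vnorm_nonneg _ _) hc (h v)) hc

/-- The ratio is invariant under scaling, so it is bounded by its maximum on the unit sphere. -/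
lemma bddAbove_vnorm_div_vnorm {P : Matrix α α ℝ} (hP : P.PosDef) (R : Matrix β β ℝ)
    (M : Matrix β α ℝ) :
    BddAbove {r : ℝ | ∃ v : α → ℝ, v ≠ 0 ∧ r = vnorm R (M *ᵥ v) / vnorm P v} := by
  set f : (α → ℝ) → ℝ := fun v => vnorm R (M *ᵥ v) / vnorm P v
  have hf : ContinuousOn f (Metric.sphere 0 1) :=
    ContinuousOn.div (by fun_prop) (continuous_vnorm P).continuousOn
      fun v hv => (vnorm_pos hP (ne_zero_of_mem_unit_sphere ⟨v, hv⟩)).ne'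
  obtain ⟨C, hC⟩ := (isCompact_sphere (0 : α → ℝ) 1).bddAbove_image hf
  refine ⟨C, ?_⟩
  rintro _ ⟨v, hv, rfl⟩
  have hnorm : ‖v‖⁻¹ ≠ 0 := inv_ne_zero (norm_ne_zero_iff.2 hv)
  have hscale : f (‖v‖⁻¹ • v) = f v := by
    simp only [f, mulVec_smul, vnorm_smul]
    exact mul_div_mul_left _ _ (abs_ne_zero.2 hnorm)
  change f v ≤ C
  rw [← hscale]
  exact hC ⟨_, by simp [norm_smul, hv], rfl⟩

lemma vnorm_mulVec_le_wnorm_mul {P : Matrix α α ℝ} (hP : P.PosDef) {R : Matrix β β ℝ}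
    (M : Matrix β α ℝ) (v : α → ℝ) : vnorm R (M *ᵥ v) ≤ wnorm P R M * vnorm P v := by
  rcases eq_or_ne v 0 with rfl | hv
  · simp
  rw [← div_le_iff₀ (vnorm_pos hP hv)]
  exact le_csSup (bddAbove_vnorm_div_vnorm hP R M) ⟨v, hv, rfl⟩

lemma wnorm_mul_le {P : Matrix α α ℝ} {Q : Matrix β β ℝ} {R : Matrix γ γ ℝ} (hP : P.PosDef)
    (hQ : Q.PosDef) (B : Matrix γ β ℝ) (A : Matrix β α ℝ) :
    wnorm P R (B * A) ≤ wnorm Q R B * wnorm P Q A := by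
  refine wnorm_le_of_forall (mul_nonneg (wnorm_nonneg _ _ _) (wnorm_nonneg _ _ _)) fun v => ?_
  rw [← mulVec_mulVec, mul_assoc]
  exact (vnorm_mulVec_le_wnorm_mul hQ B _).trans
    (mul_le_mul_of_nonneg_left (vnorm_mulVec_le_wnorm_mul hP A v) (wnorm_nonneg _ _ _))

lemma wnorm_neg (P : Matrix α α ℝ) (R : Matrix β β ℝ) (M : Matrix β α ℝ) :
    wnorm P R (-M) = wnorm P R M := by
  simp only [wnorm, neg_mulVec, vnorm_neg]

lemma wnorm_transpose_le [DecidableEq α] [DecidableEq β] {P : Matrix α α ℝ}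
    {R : Matrix β β ℝ} (hP : P.PosDef) (hR : R.PosDef) (B : Matrix β α ℝ) :
    wnorm R P⁻¹ Bᵀ ≤ wnorm P R⁻¹ B := by
  refine wnorm_le_of_forall (wnorm_nonneg _ _ _) fun x => ?_
  set t := vnorm P⁻¹ (Bᵀ *ᵥ x)
  have ht : t ^ 2 ≤ wnorm P R⁻¹ B * vnorm R x * t := calc
    t ^ 2 = B *ᵥ (P⁻¹ *ᵥ (Bᵀ *ᵥ x)) ⬝ᵥ x := by
      rw [sq_vnorm hP.inv.posSemidef, dotProduct_comm, dotProduct_transpose_mulVec, dotProduct_comm]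
    _ ≤ vnorm R⁻¹ (B *ᵥ (P⁻¹ *ᵥ (Bᵀ *ᵥ x))) * vnorm R x :=
      dotProduct_le_vnorm_inv_mul_vnorm hR _ _
    _ ≤ wnorm P R⁻¹ B * vnorm P (P⁻¹ *ᵥ (Bᵀ *ᵥ x)) * vnorm R x :=
      mul_le_mul_of_nonneg_right (vnorm_mulVec_le_wnorm_mul hP B _) (vnorm_nonneg _ _)
    _ = wnorm P R⁻¹ B * vnorm R x * t := by
      rw [vnorm_inv_mulVec hP]
      ring
  exact le_of_sq_le_mul (mul_nonneg (wnorm_nonneg _ _ _) (vnorm_nonneg _ _)) ht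

end WeightedNorm

section QuadraticForm

variable {α : Type*} [Fintype α]

lemma dotProduct_half_add_transpose_mulVec (F : Matrix α α ℝ) (z : α → ℝ) :
    z ⬝ᵥ ((((1 : ℝ) / 2) • (F + Fᵀ)) *ᵥ z) = z ⬝ᵥ (F *ᵥ z) := by
  rw [smul_mulVec, add_mulVec, dotProduct_smul, dotProduct_add, dotProduct_transpose_mulVec,
    smul_eq_mul]
  ring

variable [DecidableEq α] {H F : Matrix α α ℝ}

lemma vnorm_le_vnorm_inv_mulVec (hH : H.PosDef)
    (hF : ∀ z, z ⬝ᵥ (F *ᵥ z) = z ⬝ᵥ (H *ᵥ z)) (z : α → ℝ) :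
    vnorm H z ≤ vnorm H⁻¹ (F *ᵥ z) := by
  refine le_of_sq_le_mul (vnorm_nonneg _ _) ?_
  rw [sq_vnorm hH.posSemidef, ← hF, dotProduct_comm]
  exact dotProduct_le_vnorm_inv_mul_vnorm hH _ _

lemma isUnit_det_of_dotProduct_mulVec_eq (hH : H.PosDef)
    (hF : ∀ z, z ⬝ᵥ (F *ᵥ z) = z ⬝ᵥ (H *ᵥ z)) : IsUnit F.det := by
  refine isUnit_iff_ne_zero.2 fun hdet => ?_
  obtain ⟨z, hz, hFz⟩ := exists_mulVec_eq_zero_iff.2 hdet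
  have := vnorm_le_vnorm_inv_mulVec hH hF z
  rw [hFz, vnorm_zero] at this
  exact (vnorm_pos hH hz).not_ge this

lemma wnorm_inv_le_one (hH : H.PosDef) (hF : ∀ z, z ⬝ᵥ (F *ᵥ z) = z ⬝ᵥ (H *ᵥ z)) :
    wnorm H⁻¹ H F⁻¹ ≤ 1 :=
  wnorm_le_of_forall zero_le_one fun w => by
    simpa [mulVec_mulVec, mul_nonsing_inv _ (isUnit_det_of_dotProduct_mulVec_eq hH hF)]
      using vnorm_le_vnorm_inv_mulVec hH hF (F⁻¹ *ᵥ w)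

end QuadraticForm

section Blocks

variable {α β : Type*} [Fintype α] [Fintype β]

lemma sq_vnorm_fromBlocks_diag {P : Matrix α α ℝ} {Q : Matrix β β ℝ} (hP : P.PosSemidef)
    (hQ : Q.PosSemidef) (a : α → ℝ) (b : β → ℝ) :
    vnorm (fromBlocks P 0 0 Q) (Sum.elim a b) ^ 2 = vnorm P a ^ 2 + vnorm Q b ^ 2 := by
  have hsplit : Sum.elim a b ⬝ᵥ (fromBlocks P 0 0 Q *ᵥ Sum.elim a b) =
      a ⬝ᵥ (P *ᵥ a) + b ⬝ᵥ (Q *ᵥ b) := by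
    simp [fromBlocks_mulVec]
  rw [vnorm, hsplit, Real.sq_sqrt (by rw [← sq_vnorm hP, ← sq_vnorm hQ]; positivity),
    sq_vnorm hP, sq_vnorm hQ]

lemma wnorm_fromBlocks_antidiag_le {P P' : Matrix α α ℝ} {Q Q' : Matrix β β ℝ}
    (hP : P.PosDef) (hQ : Q.PosDef) (hP' : P'.PosSemidef) (hQ' : Q'.PosSemidef)
    (X : Matrix α β ℝ) (Y : Matrix β α ℝ) :
    wnorm (fromBlocks P 0 0 Q) (fromBlocks P' 0 0 Q') (fromBlocks 0 X Y 0) ≤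
      max (wnorm Q P' X) (wnorm P Q' Y) := by
  set c := max (wnorm Q P' X) (wnorm P Q' Y)
  have hc : 0 ≤ c := (wnorm_nonneg _ _ _).trans (le_max_left _ _)
  refine wnorm_le_of_forall hc fun v => ?_
  obtain ⟨a, b, rfl⟩ : ∃ a b, v = Sum.elim a b := ⟨_, _, (Sum.elim_comp_inl_inr v).symm⟩
  have hX : vnorm P' (X *ᵥ b) ≤ c * vnorm Q b := (vnorm_mulVec_le_wnorm_mul hQ X b).trans
    (mul_le_mul_of_nonneg_right (le_max_left _ _) (vnorm_nonneg _ _))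
  have hY : vnorm Q' (Y *ᵥ a) ≤ c * vnorm P a := (vnorm_mulVec_le_wnorm_mul hP Y a).trans
    (mul_le_mul_of_nonneg_right (le_max_right _ _) (vnorm_nonneg _ _))
  have hv : fromBlocks 0 X Y 0 *ᵥ Sum.elim a b = Sum.elim (X *ᵥ b) (Y *ᵥ a) := by
    simp [fromBlocks_mulVec]
  rw [hv, ← pow_le_pow_iff_left₀ (vnorm_nonneg _ _) (mul_nonneg hc (vnorm_nonneg _ _))
    two_ne_zero, mul_pow, sq_vnorm_fromBlocks_diag hP' hQ',
    sq_vnorm_fromBlocks_diag hP.posSemidef hQ.posSemidef]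
  nlinarith [vnorm_nonneg P' (X *ᵥ b), vnorm_nonneg Q' (Y *ᵥ a)]

lemma inv_fromBlocks_diag [DecidableEq α] [DecidableEq β] {R : Type*} [CommRing R]
    {A : Matrix α α R} {D : Matrix β β R} (hA : IsUnit A.det) (hD : IsUnit D.det) :
    (fromBlocks A 0 0 D)⁻¹ = fromBlocks A⁻¹ 0 0 D⁻¹ := by
  simpa using inv_fromBlocks_zero₂₁_of_isUnit_iff A 0 D
    (iff_of_true ((isUnit_iff_isUnit_det A).2 hA) ((isUnit_iff_isUnit_det D).2 hD))

end Blocks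

section SaddlePoint

variable {α β : Type*} [Fintype α] [Fintype β] [DecidableEq α] [DecidableEq β]

lemma fromBlocks_diag_mul_sub_transpose_mul {R : Type*} [CommRing R] {F H1 : Matrix α α R}
    {H2 : Matrix β β R} (B : Matrix β α R) (hF : IsUnit F.det) (hH2 : IsUnit H2.det)
    (hH2symm : H2ᵀ = H2) :
    fromBlocks H1 0 0 H2 * ((fromBlocks F 0 0 H2)⁻¹ * fromBlocks F Bᵀ B 0) -
        ((fromBlocks F 0 0 H2)⁻¹ * fromBlocks F Bᵀ B 0)ᵀ * fromBlocks H1 0 0 H2 =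
      fromBlocks 0 ((H1 - F) * F⁻¹ * Bᵀ) (B * (F⁻¹)ᵀ * (Fᵀ - H1)) 0 := by
  have hA : (fromBlocks F 0 0 H2)⁻¹ * fromBlocks F Bᵀ B 0 =
      fromBlocks 1 (F⁻¹ * Bᵀ) (H2⁻¹ * B) 0 := by
    simp [inv_fromBlocks_diag hF hH2, fromBlocks_multiply, nonsing_inv_mul _ hF]
  rw [hA, fromBlocks_transpose, fromBlocks_multiply, fromBlocks_multiply, sub_eq_iff_eq_add,
    fromBlocks_add]
  congr 1
  · simp
  · rw [transpose_mul, transpose_nonsing_inv, hH2symm, nonsing_inv_mul_cancel_right _ _ hH2,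
      Matrix.mul_assoc, Matrix.sub_mul, mul_nonsing_inv_cancel_left _ _ hF]
    simp
  · rw [mul_nonsing_inv_cancel_left _ _ hH2, transpose_mul, transpose_transpose, Matrix.mul_sub,
      transpose_nonsing_inv, nonsing_inv_mul_cancel_right _ _ (by rwa [det_transpose])]
    simp
  · simp

variable {H1 F : Matrix α α ℝ} {H2 : Matrix β β ℝ}

lemma wnorm_mul_inv_mul_transpose_le (hH1 : H1.PosDef) (hH2 : H2.PosDef)
    (hF : ∀ z, z ⬝ᵥ (F *ᵥ z) = z ⬝ᵥ (H1 *ᵥ z)) (N : Matrix α α ℝ) (B : Matrix β α ℝ) :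
    wnorm H2 H1⁻¹ (N * F⁻¹ * Bᵀ) ≤ wnorm H1 H1⁻¹ N * wnorm H1 H2⁻¹ B := calc
  _ ≤ wnorm H1⁻¹ H1⁻¹ (N * F⁻¹) * wnorm H2 H1⁻¹ Bᵀ := wnorm_mul_le hH2 hH1.inv _ _
  _ ≤ wnorm H1 H1⁻¹ N * wnorm H1⁻¹ H1 F⁻¹ * wnorm H1 H2⁻¹ B :=
    mul_le_mul (wnorm_mul_le hH1.inv hH1 _ _) (wnorm_transpose_le hH1 hH2 B)
      (wnorm_nonneg _ _ _) (mul_nonneg (wnorm_nonneg _ _ _) (wnorm_nonneg _ _ _))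
  _ ≤ wnorm H1 H1⁻¹ N * wnorm H1 H2⁻¹ B :=
    mul_le_mul_of_nonneg_right
      (mul_le_of_le_one_right (wnorm_nonneg _ _ _) (wnorm_inv_le_one hH1 hF))
      (wnorm_nonneg _ _ _)

lemma wnorm_mul_transpose_inv_mul_le (hH1 : H1.PosDef)
    (hF : ∀ z, z ⬝ᵥ (F *ᵥ z) = z ⬝ᵥ (H1 *ᵥ z)) (N : Matrix α α ℝ) (B : Matrix β α ℝ) :
    wnorm H1 H2⁻¹ (B * (F⁻¹)ᵀ * N) ≤ wnorm H1 H2⁻¹ B * wnorm H1 H1⁻¹ N := by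
  have hFt : wnorm H1⁻¹ H1 (F⁻¹)ᵀ ≤ 1 := by
    rw [transpose_nonsing_inv]
    exact wnorm_inv_le_one hH1 fun z => by rw [dotProduct_transpose_mulVec, hF]
  calc _ ≤ wnorm H1⁻¹ H2⁻¹ (B * (F⁻¹)ᵀ) * wnorm H1 H1⁻¹ N := wnorm_mul_le hH1 hH1.inv _ _
    _ ≤ wnorm H1 H2⁻¹ B * wnorm H1⁻¹ H1 (F⁻¹)ᵀ * wnorm H1 H1⁻¹ N :=
      mul_le_mul_of_nonneg_right (wnorm_mul_le hH1.inv hH1 _ _) (wnorm_nonneg _ _ _)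
    _ ≤ wnorm H1 H2⁻¹ B * wnorm H1 H1⁻¹ N :=
      mul_le_mul_of_nonneg_right (mul_le_of_le_one_right (wnorm_nonneg _ _ _) hFt)
        (wnorm_nonneg _ _ _)

end SaddlePoint

theorem stmt_13_general
    {n m : ℕ} (F : Matrix (Fin n) (Fin n) ℝ) (B : Matrix (Fin m) (Fin n) ℝ)
    (H1 N : Matrix (Fin n) (Fin n) ℝ) (H2 : Matrix (Fin m) (Fin m) ℝ)
    (η C₁ : ℝ)
    (hH1 : H1 = ((1 : ℝ)/2) • (F + Fᵀ)) (hN : N = ((1 : ℝ)/2) • (F - Fᵀ))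
    (hH1pd : H1.PosDef) (hH2pd : H2.PosDef)
    (hNnorm : wnorm H1 H1⁻¹ N ≤ η)
    (hBnorm : wnorm H1 H2⁻¹ B ≤ C₁)
    (K MD H : Matrix (Fin n ⊕ Fin m) (Fin n ⊕ Fin m) ℝ)
    (hK : K = fromBlocks F Bᵀ B 0)
    (hMD : MD = fromBlocks F 0 0 H2)
    (hH : H = fromBlocks H1 0 0 H2) :
    wnorm H H⁻¹ (H * (MD⁻¹ * K) - (MD⁻¹ * K)ᵀ * H) ≤ 4 * C₁ * η := by
  have hη : 0 ≤ η := (wnorm_nonneg _ _ _).trans hNnorm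
  have hC₁ : 0 ≤ C₁ := (wnorm_nonneg _ _ _).trans hBnorm
  have hF : ∀ z, z ⬝ᵥ (F *ᵥ z) = z ⬝ᵥ (H1 *ᵥ z) := fun z => by
    rw [hH1, dotProduct_half_add_transpose_mulVec]
  have hNF : H1 - F = -N ∧ Fᵀ - H1 = -N := by
    subst hH1 hN
    constructor <;> module
  have hH1det := (isUnit_iff_isUnit_det H1).1 hH1pd.isUnit
  have hH2det := (isUnit_iff_isUnit_det H2).1 hH2pd.isUnit
  have hNB : wnorm H1 H1⁻¹ (-N) * wnorm H1 H2⁻¹ B ≤ η * C₁ := by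
    rw [wnorm_neg]
    exact mul_le_mul hNnorm hBnorm (wnorm_nonneg _ _ _) hη
  rw [hK, hMD, hH, fromBlocks_diag_mul_sub_transpose_mul B
    (isUnit_det_of_dotProduct_mulVec_eq hH1pd hF) hH2det
    (isHermitian_iff_isSymm.1 hH2pd.isHermitian).eq, hNF.1, hNF.2,
    inv_fromBlocks_diag hH1det hH2det]
  calc _ ≤ max (wnorm H2 H1⁻¹ (-N * F⁻¹ * Bᵀ)) (wnorm H1 H2⁻¹ (B * (F⁻¹)ᵀ * -N)) :=
        wnorm_fromBlocks_antidiag_le hH1pd hH2pd hH1pd.inv.posSemidef hH2pd.inv.posSemidef _ _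
    _ ≤ η * C₁ := max_le ((wnorm_mul_inv_mul_transpose_le hH1pd hH2pd hF _ B).trans hNB)
        ((wnorm_mul_transpose_inv_mul_le hH1pd hF _ B).trans (by rw [mul_comm]; exact hNB))
    _ ≤ 4 * C₁ * η := by nlinarith [mul_nonneg hη hC₁]

theorem stmt_13
    {n m : ℕ} (F : Matrix (Fin n) (Fin n) ℝ) (B : Matrix (Fin m) (Fin n) ℝ)
    (H1 N : Matrix (Fin n) (Fin n) ℝ) (H2 : Matrix (Fin m) (Fin m) ℝ)
    (η C₁ C₂ : ℝ) (hη : 0 < η) (hC1 : 0 < C₁) (hC2 : 0 < C₂)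
    (hH1 : H1 = ((1 : ℝ)/2) • (F + Fᵀ)) (hN : N = ((1 : ℝ)/2) • (F - Fᵀ))
    (hH1pd : H1.PosDef) (hH2pd : H2.PosDef)
    (hBrank : B.rank = m)
    (hNnorm : wnorm H1 H1⁻¹ N ≤ η)
    (hBnorm : wnorm H1 H2⁻¹ B ≤ C₁)
    (hinfsup : ∀ x : Fin m → ℝ, x ≠ 0 → C₂ * vnorm H2 x ≤ vnorm H1⁻¹ (Bᵀ *ᵥ x))
    (hsmall : η < 1/2)
    (K MD H : Matrix (Fin n ⊕ Fin m) (Fin n ⊕ Fin m) ℝ)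
    (hK : K = fromBlocks F Bᵀ B 0)
    (hMD : MD = fromBlocks F 0 0 H2)
    (hH : H = fromBlocks H1 0 0 H2) :
    wnorm H H⁻¹ (H * (MD⁻¹ * K) - (MD⁻¹ * K)ᵀ * H) ≤ 4 * C₁ * η :=
  stmt_13_general F B H1 N H2 η C₁ hH1 hN hH1pd hH2pd hNnorm hBnorm K MD H hK hMD hH
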